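/- Newton step error bound via power functions: let f be in an RKHS H with ||f||_H ≤ B, and suppose at a point x the true gradient g and Hessian H_x (invertible) satisfy ||g − ĝ||² ≤ π_g B² and ||H_x − Ĥ||² ≤ π_H B² (operator norm) for estimates ĝ, Ĥ with Ĥ invertible. Then the Newton-step error satisfies ||H_x^{-1}g − Ĥ^{-1}ĝ|| ≤ √2 · B · ||H_x^{-1}|| · sqrt(π_g + s·π_H), where s = ||Ĥ^{-1}||² ||ĝ||². -/

import Mathlib

/-!
The resolvent identity `Hx⁻¹ - Ĥ⁻¹ = Hx⁻¹ (Ĥ - Hx) Ĥ⁻¹` gives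
`Hx⁻¹ g - Ĥ⁻¹ ĝ = Hx⁻¹ ((g - ĝ) + (Ĥ - Hx) Ĥ⁻¹ ĝ)`, so the Newton-step error is at most
`‖Hx⁻¹‖ (‖g - ĝ‖ + ‖Hx - Ĥ‖ ‖Ĥ⁻¹‖ ‖ĝ‖)`. The two summands are at most `B √πg` and
`B √(s πH)`, and `x + y ≤ √2 √(x² + y²)` combines them under a single square root.
-/

/-- Operator 2-norm of a real matrix (norm of the induced linear map on
Euclidean space). -/
noncomputable def opNorm {d : ℕ} (A : Matrix (Fin d) (Fin d) ℝ) : ℝ :=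
  ‖(Matrix.toEuclideanCLM (𝕜 := ℝ) A : EuclideanSpace ℝ (Fin d) →L[ℝ] EuclideanSpace ℝ (Fin d))‖

theorem Matrix.inv_sub_inv_of_isUnit_det {n α : Type*} [Fintype n] [DecidableEq n] [CommRing α]
    {A B : Matrix n n α} (hA : IsUnit A.det) (hB : IsUnit B.det) :
    A⁻¹ - B⁻¹ = A⁻¹ * (B - A) * B⁻¹ := by
  rw [Matrix.mul_sub, Matrix.sub_mul, Matrix.nonsing_inv_mul A hA, Matrix.mul_assoc,
    Matrix.mul_nonsing_inv B hB, Matrix.mul_one, Matrix.one_mul]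

theorem Real.add_le_sqrt_two_mul_sqrt_add {x y p q : ℝ} (hx : x ^ 2 ≤ p) (hy : y ^ 2 ≤ q) :
    x + y ≤ √2 * √(p + q) := by
  rw [← Real.sqrt_mul zero_le_two]
  refine (le_abs_self _).trans (Real.abs_le_sqrt ?_)
  nlinarith [sq_nonneg (x - y)]

section opNorm

variable {d : ℕ}

local notation "L" => Matrix.toEuclideanCLM (𝕜 := ℝ) (n := Fin d)

theorem opNorm_nonneg (A : Matrix (Fin d) (Fin d) ℝ) : 0 ≤ opNorm A :=
  norm_nonneg _

theorem norm_toEuclideanCLM_apply_le (A : Matrix (Fin d) (Fin d) ℝ)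
    (v : EuclideanSpace ℝ (Fin d)) : ‖L A v‖ ≤ opNorm A * ‖v‖ :=
  (L A).le_opNorm v

theorem opNorm_sub_comm (A B : Matrix (Fin d) (Fin d) ℝ) : opNorm (A - B) = opNorm (B - A) := by
  simp only [opNorm, map_sub, norm_sub_rev]

theorem norm_inv_apply_sub_inv_apply_le {A B : Matrix (Fin d) (Fin d) ℝ}
    (hA : IsUnit A.det) (hB : IsUnit B.det) (u v : EuclideanSpace ℝ (Fin d)) :
    ‖L A⁻¹ u - L B⁻¹ v‖ ≤ opNorm A⁻¹ * (‖u - v‖ + opNorm (A - B) * (opNorm B⁻¹ * ‖v‖)) := by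
  have hres : L A⁻¹ (L (B - A) (L B⁻¹ v)) = L A⁻¹ v - L B⁻¹ v := by
    rw [← sub_apply, ← map_sub, Matrix.inv_sub_inv_of_isUnit_det hA hB,
      map_mul, map_mul]
    rfl
  have hsplit : L A⁻¹ u - L B⁻¹ v = L A⁻¹ ((u - v) + L (B - A) (L B⁻¹ v)) := by
    rw [map_add, map_sub, hres]
    abel
  rw [hsplit]
  refine (norm_toEuclideanCLM_apply_le _ _).trans (mul_le_mul_of_nonneg_left ?_ (opNorm_nonneg _))
  refine (norm_add_le _ _).trans (add_le_add le_rfl ?_)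
  rw [opNorm_sub_comm]
  exact (norm_toEuclideanCLM_apply_le _ _).trans
    (mul_le_mul_of_nonneg_left (norm_toEuclideanCLM_apply_le _ _) (opNorm_nonneg _))

end opNorm

theorem newton_step_power_function_bound_general (d : ℕ) (B πg πH : ℝ)
    (hB : 0 ≤ B)
    (g ghat : EuclideanSpace ℝ (Fin d))
    (Hx Hhat : Matrix (Fin d) (Fin d) ℝ)
    (hHx : IsUnit Hx.det) (hHhat : IsUnit Hhat.det)
    (hgerr : ‖g - ghat‖ ^ 2 ≤ πg * B ^ 2)
    (hHerr : opNorm (Hx - Hhat) ^ 2 ≤ πH * B ^ 2) :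
    ‖(Matrix.toEuclideanCLM (𝕜 := ℝ) Hx⁻¹) g -
      (Matrix.toEuclideanCLM (𝕜 := ℝ) Hhat⁻¹) ghat‖ ≤
      Real.sqrt 2 * B * opNorm Hx⁻¹ *
        Real.sqrt (πg + (opNorm Hhat⁻¹ ^ 2 * ‖ghat‖ ^ 2) * πH) := by
  set s := opNorm Hhat⁻¹ ^ 2 * ‖ghat‖ ^ 2
  have hHerr_scaled : (opNorm (Hx - Hhat) * (opNorm Hhat⁻¹ * ‖ghat‖)) ^ 2 ≤ s * πH * B ^ 2 := by
    rw [mul_pow, mul_pow, mul_assoc, mul_comm]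
    exact mul_le_mul_of_nonneg_left hHerr (by positivity)
  have hsum := Real.add_le_sqrt_two_mul_sqrt_add hgerr hHerr_scaled
  rw [← add_mul, Real.sqrt_mul' _ (sq_nonneg B), Real.sqrt_sq hB] at hsum
  calc _ ≤ opNorm Hx⁻¹ * (‖g - ghat‖ + opNorm (Hx - Hhat) * (opNorm Hhat⁻¹ * ‖ghat‖)) :=
        norm_inv_apply_sub_inv_apply_le hHx hHhat g ghat
    _ ≤ opNorm Hx⁻¹ * (√2 * (√(πg + s * πH) * B)) :=
        mul_le_mul_of_nonneg_left hsum (opNorm_nonneg _)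
    _ = _ := by ring

/-- Newton-step error bound via power functions: given gradient and Hessian
estimation errors controlled by the power functions `πg`, `πH` times `B²`,
the Newton-step error is bounded by `√2 · B · ‖Hx⁻¹‖ · √(πg + s πH)` with
`s = ‖Ĥ⁻¹‖² ‖ĝ‖²`. -/
theorem newton_step_power_function_bound (d : ℕ) (B πg πH : ℝ)
    (hB : 0 ≤ B) (hπg : 0 ≤ πg) (hπH : 0 ≤ πH)
    (g ghat : EuclideanSpace ℝ (Fin d))
    (Hx Hhat : Matrix (Fin d) (Fin d) ℝ)
    (hHx : IsUnit Hx.det) (hHhat : IsUnit Hhat.det)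
    (hgerr : ‖g - ghat‖ ^ 2 ≤ πg * B ^ 2)
    (hHerr : opNorm (Hx - Hhat) ^ 2 ≤ πH * B ^ 2) :
    ‖(Matrix.toEuclideanCLM (𝕜 := ℝ) Hx⁻¹) g -
      (Matrix.toEuclideanCLM (𝕜 := ℝ) Hhat⁻¹) ghat‖ ≤
      Real.sqrt 2 * B * opNorm Hx⁻¹ *
        Real.sqrt (πg + (opNorm Hhat⁻¹ ^ 2 * ‖ghat‖ ^ 2) * πH) :=
  newton_step_power_function_bound_general d B πg πH hB g ghat Hx Hhat hHx hHhat hgerr hHerr
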